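/- Let a ≥ 1, x ≥ 0, and let g : [0,∞) → ℝ be continuously differentiable with |g'(r)| ≤ x·(a+r)^{−4} for all r ≥ 0. Define ḡ(r) = (1/r)∫₀ʳ g(s) ds for r > 0. Then ∫₀^∞ (g(s) − ḡ(s))² / s ds ≤ x² / a⁶. -/

import Mathlib

noncomputable section

open Real Set

/-- Radial average `ḡ(r) = (1/r)∫₀ʳ g(s) ds`, with `ḡ(0) = g(0)`. -/
def radAvg1 (g : ℝ → ℝ) (r : ℝ) : ℝ :=
  if r = 0 then g 0 else (1 / r) * ∫ s in (0:ℝ)..r, g s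

/-!
Put `K(s) = s g(s) - ∫₀ˢ g`, so that `g - ḡ = K / s` and `K' = s g'`. Then
`|K'(s)| ≤ x s / (a + s)⁴ ≤ B'(s)` for `B(s) = x s² / (2a²(a + s)²)`, and since
`K(0) = B(0) = 0` the fencing inequality for right derivatives gives `|K| ≤ B`. Hence
`(g - ḡ)² / s = K² / s³ ≤ x² / (4a⁴(a + s)³)`, whose integral over `(0, ∞)` is
`x² / (8a⁶)`.
-/

open MeasureTheory Filter Topology

theorem hasDerivWithinAt_integral_Ici_of_continuousOn {E : Type*} [NormedAddCommGroup E]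
    [NormedSpace ℝ E] [CompleteSpace E] {f : ℝ → E} {a b : ℝ} (hf : ContinuousOn f (Ici a))
    (hb : a ≤ b) : HasDerivWithinAt (fun u => ∫ t in a..u, f t) (f b) (Ici b) b := by
  refine intervalIntegral.integral_hasDerivWithinAt_right (t := Ioi b)
    ((hf.mono ?_).intervalIntegrable)
    ((hf.mono (Ioi_subset_Ici hb)).stronglyMeasurableAtFilter_nhdsWithin measurableSet_Ioi b)
    ((hf b hb).mono (Ioi_subset_Ici hb))
  rw [uIcc_of_le hb]
  exact Icc_subset_Ici_self

theorem continuousOn_integral_Icc_of_continuousOn {E : Type*} [NormedAddCommGroup E]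
    [NormedSpace ℝ E] {f : ℝ → E} {a b : ℝ} (hf : ContinuousOn f (Ici a)) (hb : a ≤ b) :
    ContinuousOn (fun u => ∫ t in a..u, f t) (Icc a b) := by
  have hint : IntegrableOn f (uIcc a b) := by
    rw [uIcc_of_le hb]
    exact (hf.mono Icc_subset_Ici_self).integrableOn_Icc
  simpa only [uIcc_of_le hb] using intervalIntegral.continuousOn_primitive_interval hint

theorem hasDerivAt_div_add_sq {a r : ℝ} (hr : a + r ≠ 0) :
    HasDerivAt (fun s => (s / (a + s)) ^ 2) (2 * a * r / (a + r) ^ 3) r := by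
  have h := ((hasDerivAt_id' r).div ((hasDerivAt_id' r).const_add a) hr).pow 2
  refine h.congr_deriv ?_
  simp only [Pi.div_apply, Nat.cast_ofNat, Nat.add_one_sub_one, pow_one]
  field_simp
  ring

theorem hasDerivAt_neg_inv_two_mul_add_sq {a r : ℝ} (hr : a + r ≠ 0) :
    HasDerivAt (fun s => -(2 * (a + s) ^ 2)⁻¹) ((a + r) ^ 3)⁻¹ r := by
  have h := ((((hasDerivAt_id' r).const_add a).pow 2).const_mul 2).inv
    (mul_ne_zero two_ne_zero (pow_ne_zero 2 hr))
  refine h.neg.congr_deriv ?_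
  simp only [Pi.pow_apply, Nat.cast_ofNat, Nat.add_one_sub_one, pow_one]
  field_simp

theorem lintegral_Ioi_ofReal_inv_add_pow_three {a : ℝ} (ha : 0 < a) :
    ∫⁻ s in Ioi (0:ℝ), ENNReal.ofReal ((a + s) ^ 3)⁻¹ =
      ENNReal.ofReal (2 * a ^ 2)⁻¹ := by
  have hderiv :
      ∀ r ∈ Ici (0:ℝ), HasDerivAt (fun s => -(2 * (a + s) ^ 2)⁻¹) ((a + r) ^ 3)⁻¹ r :=
    fun r hr => hasDerivAt_neg_inv_two_mul_add_sq (by linarith [mem_Ici.1 hr])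
  have hpos : ∀ r ∈ Ioi (0:ℝ), 0 ≤ ((a + r) ^ 3)⁻¹ := fun r hr => by
    have : 0 < a + r := by linarith [mem_Ioi.1 hr]
    positivity
  have hlim : Tendsto (fun s => -(2 * (a + s) ^ 2)⁻¹) atTop (𝓝 0) := by
    have : Tendsto (fun s : ℝ => 2 * (a + s) ^ 2) atTop atTop :=
      ((tendsto_pow_atTop two_ne_zero).comp
        (tendsto_atTop_add_const_left atTop a tendsto_id)).const_mul_atTop two_pos
    simpa using this.inv_tendsto_atTop.neg
  rw [← ofReal_integral_eq_lintegral_ofReal (integrableOn_Ioi_deriv_of_nonneg' hderiv hpos hlim)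
    ((ae_restrict_iff' measurableSet_Ioi).2 (.of_forall hpos)),
    integral_Ioi_of_hasDerivAt_of_nonneg' hderiv hpos hlim]
  simp

theorem sub_radAvg1_eq (g : ℝ → ℝ) {s : ℝ} (hs : s ≠ 0) :
    g s - radAvg1 g s = (s * g s - ∫ t in (0:ℝ)..s, g t) / s := by
  rw [radAvg1, if_neg hs]
  field_simp

section
variable {g g' : ℝ → ℝ} {a x : ℝ}

theorem hasDerivWithinAt_mul_sub_integral
    (hd : ∀ r ∈ Ici (0:ℝ), HasDerivWithinAt g (g' r) (Ici 0) r) {r : ℝ} (hr : 0 ≤ r) :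
    HasDerivWithinAt (fun s => s * g s - ∫ t in (0:ℝ)..s, g t) (r * g' r) (Ici r) r := by
  have hg : ContinuousOn g (Ici 0) := fun r hr => (hd r hr).continuousWithinAt
  have h := ((hasDerivWithinAt_id r _).mul ((hd r hr).mono (Ici_subset_Ici.2 hr))).sub
    (hasDerivWithinAt_integral_Ici_of_continuousOn hg hr)
  refine h.congr_deriv ?_
  simp only [id]
  ring

theorem abs_mul_sub_integral_le (ha : 0 < a) (hx : 0 ≤ x)
    (hd : ∀ r ∈ Ici (0:ℝ), HasDerivWithinAt g (g' r) (Ici 0) r)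
    (hb : ∀ r ∈ Ici (0:ℝ), |g' r| ≤ x / (a + r) ^ 4) {s : ℝ} (hs : 0 ≤ s) :
    |s * g s - ∫ t in (0:ℝ)..s, g t| ≤ x / (2 * a ^ 2) * (s / (a + s)) ^ 2 := by
  have hg : ContinuousOn g (Ici 0) := fun r hr => (hd r hr).continuousWithinAt
  have hB : ∀ r ∈ Ici (0:ℝ), HasDerivAt (fun s => x / (2 * a ^ 2) * (s / (a + s)) ^ 2)
      (x * r / (a * (a + r) ^ 3)) r := by
    intro r hr
    have hr' : 0 < a + r := by linarith [mem_Ici.1 hr]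
    refine ((hasDerivAt_div_add_sq hr'.ne').const_mul (x / (2 * a ^ 2))).congr_deriv ?_
    field_simp
  refine image_norm_le_of_norm_deriv_right_le_deriv_boundary'
    ((continuousOn_id.mul (hg.mono Icc_subset_Ici_self)).sub
      (continuousOn_integral_Icc_of_continuousOn hg hs))
    (fun r hr => hasDerivWithinAt_mul_sub_integral hd hr.1) (by simp)
    (fun r hr => (hB r hr.1).continuousAt.continuousWithinAt)
    (fun r hr => (hB r hr.1).hasDerivWithinAt) (fun r hr => ?_) ⟨hs, le_rfl⟩
  have hr : 0 ≤ r := hr.1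
  have hpos : 0 < a + r := by linarith
  calc ‖r * g' r‖ = r * |g' r| := by rw [Real.norm_eq_abs, abs_mul, abs_of_nonneg hr]
    _ ≤ r * (x / (a + r) ^ 4) := mul_le_mul_of_nonneg_left (hb r hr) hr
    _ = x * r / ((a + r) * (a + r) ^ 3) := by ring
    _ ≤ x * r / (a * (a + r) ^ 3) := by gcongr; linarith

theorem sq_sub_radAvg1_div_le (ha : 0 < a) (hx : 0 ≤ x)
    (hd : ∀ r ∈ Ici (0:ℝ), HasDerivWithinAt g (g' r) (Ici 0) r)
    (hb : ∀ r ∈ Ici (0:ℝ), |g' r| ≤ x / (a + r) ^ 4) {s : ℝ} (hs : 0 < s) :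
    (g s - radAvg1 g s) ^ 2 / s ≤ x ^ 2 / (4 * a ^ 4) * ((a + s) ^ 3)⁻¹ := by
  have hK : |s * g s - ∫ t in (0:ℝ)..s, g t| ≤ x / (2 * a ^ 2) * (s / (a + s)) ^ 2 :=
    abs_mul_sub_integral_le ha hx hd hb hs.le
  have has : 0 < a + s := by linarith
  calc (g s - radAvg1 g s) ^ 2 / s = |s * g s - ∫ t in (0:ℝ)..s, g t| ^ 2 / s ^ 3 := by
        rw [sub_radAvg1_eq g hs.ne', sq_abs]
        field_simp
    _ ≤ (x / (2 * a ^ 2) * (s / (a + s)) ^ 2) ^ 2 / s ^ 3 := by gcongr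
    _ = x ^ 2 / (4 * a ^ 4) * (s / (a + s)) * ((a + s) ^ 3)⁻¹ := by
        field_simp
        ring
    _ ≤ x ^ 2 / (4 * a ^ 4) * ((a + s) ^ 3)⁻¹ := by
        gcongr
        exact mul_le_of_le_one_right (by positivity) ((div_le_one has).2 (by linarith))

end

theorem integral_estimate_for_metric_coefficient_general
    (a x : ℝ) (ha : 1 ≤ a) (hx : 0 ≤ x) (g g' : ℝ → ℝ)
    (hd : ∀ r ∈ Ici (0:ℝ), HasDerivWithinAt g (g' r) (Ici 0) r)
    (hb : ∀ r ∈ Ici (0:ℝ), |g' r| ≤ x / (a + r) ^ 4) :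
    ∫⁻ s in Ioi (0:ℝ), ENNReal.ofReal ((g s - radAvg1 g s) ^ 2 / s)
      ≤ ENNReal.ofReal (x ^ 2 / a ^ 6) := by
  have ha₀ : 0 < a := by linarith
  have hc : 0 ≤ x ^ 2 / (4 * a ^ 4) := by positivity
  calc ∫⁻ s in Ioi (0:ℝ), ENNReal.ofReal ((g s - radAvg1 g s) ^ 2 / s)
      ≤ ∫⁻ s in Ioi (0:ℝ), ENNReal.ofReal (x ^ 2 / (4 * a ^ 4) * ((a + s) ^ 3)⁻¹) :=
        setLIntegral_mono' measurableSet_Ioi fun s hs =>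
          ENNReal.ofReal_le_ofReal (sq_sub_radAvg1_div_le ha₀ hx hd hb hs)
    _ = ENNReal.ofReal (x ^ 2 / (4 * a ^ 4) * (2 * a ^ 2)⁻¹) := by
        simp_rw [ENNReal.ofReal_mul hc]
        rw [lintegral_const_mul' _ _ ENNReal.ofReal_ne_top,
          lintegral_Ioi_ofReal_inv_add_pow_three ha₀]
    _ ≤ ENNReal.ofReal (x ^ 2 / a ^ 6) := by
        refine ENNReal.ofReal_le_ofReal ?_
        rw [show x ^ 2 / (4 * a ^ 4) * (2 * a ^ 2)⁻¹ = x ^ 2 / a ^ 6 / 8 by field_simp; ring]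
        exact div_le_self (by positivity) (by norm_num)

/-- Christodoulou's integral estimate controlling the metric
coefficient `f`: if `|g'(r)| ≤ x(a+r)^{−4}` on `[0,∞)` with `a ≥ 1`, then
`∫₀^∞ (g − ḡ)²/s ds ≤ x²/a⁶`. -/
theorem integral_estimate_for_metric_coefficient
    (a x : ℝ) (ha : 1 ≤ a) (hx : 0 ≤ x) (g g' : ℝ → ℝ)
    (hd : ∀ r ∈ Ici (0:ℝ), HasDerivWithinAt g (g' r) (Ici 0) r)
    (hc : ContinuousOn g' (Ici 0))
    (hb : ∀ r ∈ Ici (0:ℝ), |g' r| ≤ x / (a + r) ^ 4) :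
    ∫⁻ s in Ioi (0:ℝ), ENNReal.ofReal ((g s - radAvg1 g s) ^ 2 / s)
      ≤ ENNReal.ofReal (x ^ 2 / a ^ 6) :=
  integral_estimate_for_metric_coefficient_general a x ha hx g g' hd hb
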